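/- Let U₀, V₀, W₀ be Banach spaces over 𝕜 = ℝ or ℂ and set U := (U₀)*, V := (V₀)*, W := (W₀)*; regard U₀ ⊆ U*, V₀ ⊆ V*, W₀ ⊆ W* via the canonical embeddings into the double duals. Suppose ι : U → V and π : V → W are continuous linear maps with ι injective, range ι = ker π, and π surjective, and suppose π*(W₀) ⊆ V₀ and ι*(V₀) ⊆ U₀. Let ι₀ : V₀ → U₀ denote the restriction of ι*. Then the range of ι₀ is dense in U₀. -/

import Mathlib

/-!
A functional `u` on `U₀` vanishing on the range of `ι₀` satisfies `(ι u)(v) = u (ι₀ v) = 0` for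
every `v ∈ V₀`, so `ι u = 0` and hence `u = 0` by injectivity of `ι`. By Hahn–Banach, a
subspace annihilated only by the zero functional is dense.
-/

open NormedSpace

variable {𝕜 : Type*} [RCLike 𝕜]

/-- The dual map `f* : F* → E*`, `f*(μ) = μ ∘ f`, of a continuous linear map `f : E → F`. -/
noncomputable def dualMap {E F : Type*} [NormedAddCommGroup E] [NormedSpace 𝕜 E]
    [NormedAddCommGroup F] [NormedSpace 𝕜 F] (f : E →L[𝕜] F) :
    StrongDual 𝕜 F →L[𝕜] StrongDual 𝕜 E :=
  (ContinuousLinearMap.compL 𝕜 E F 𝕜).flip f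

@[simp]
theorem dualMap_apply {E F : Type*} [NormedAddCommGroup E] [NormedSpace 𝕜 E]
    [NormedAddCommGroup F] [NormedSpace 𝕜 F] (f : E →L[𝕜] F) (μ : StrongDual 𝕜 F) (x : E) :
    dualMap f μ x = μ (f x) :=
  rfl

theorem Submodule.dense_of_forall_dual_eq_zero {F : Type*} [NormedAddCommGroup F]
    [NormedSpace 𝕜 F] (S : Submodule 𝕜 F)
    (h : ∀ g : StrongDual 𝕜 F, (∀ x ∈ S, g x = 0) → g = 0) : Dense (S : Set F) := by
  let T := S.topologicalClosure
  have : IsClosed (T : Set F) := S.isClosed_topologicalClosure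
  refine Submodule.dense_iff_topologicalClosure_eq_top.mpr (T.eq_top_iff'.mpr fun x => ?_)
  by_contra hx
  -- separate `x` from `T` by a functional on the normed quotient `F ⧸ T`
  obtain ⟨g, hg⟩ := SeparatingDual.exists_ne_zero (R := 𝕜)
    (mt (Submodule.Quotient.mk_eq_zero T).mp hx)
  have hgT : g.comp T.mkQL = 0 := h _ fun y hy => by
    simp [(Submodule.Quotient.mk_eq_zero T).mpr (S.le_topologicalClosure hy)]
  exact hg (by simpa using congr($hgT x))

theorem ContinuousLinearMap.denseRange_of_forall_dual_comp_eq_zero {E F : Type*}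
    [NormedAddCommGroup E] [NormedSpace 𝕜 E] [NormedAddCommGroup F] [NormedSpace 𝕜 F]
    (T : E →L[𝕜] F) (h : ∀ g : StrongDual 𝕜 F, g.comp T = 0 → g = 0) : DenseRange T := by
  have := (LinearMap.range (T : E →ₗ[𝕜] F)).dense_of_forall_dual_eq_zero fun g hg =>
    h g (ContinuousLinearMap.ext fun y => hg _ ⟨y, rfl⟩)
  simpa [DenseRange, LinearMap.coe_range] using this

theorem predual_sequence_dense_range_general {U₀ V₀ : Type*}
    [NormedAddCommGroup U₀] [NormedSpace 𝕜 U₀]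
    [NormedAddCommGroup V₀] [NormedSpace 𝕜 V₀]
    (ι : StrongDual 𝕜 U₀ →L[𝕜] StrongDual 𝕜 V₀)
    (hι : Function.Injective ι)
    -- `ι₀ : V₀ → U₀` is the restriction of `ι*` to the preduals:
    (ι₀ : V₀ →L[𝕜] U₀)
    (hι₀ : ∀ v : V₀,
      inclusionInDoubleDual 𝕜 U₀ (ι₀ v) = dualMap ι (inclusionInDoubleDual 𝕜 V₀ v)) :
    DenseRange ι₀ := by
  refine ι₀.denseRange_of_forall_dual_comp_eq_zero fun u hu => hι ?_
  ext v
  have pairing : u (ι₀ v) = ι u v := by simpa using congr($(hι₀ v) u)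
  simpa [← pairing] using congr($hu v)

/-- If `0 → U → V → W → 0` is an exact sequence of dual Banach spaces
(`U = (U₀)*`, `V = (V₀)*`, `W = (W₀)*`) whose dual maps preserve the preduals
(`π*(W₀) ⊆ V₀`, `ι*(V₀) ⊆ U₀`, where the preduals are regarded as subspaces of the duals
via the canonical embeddings into the double duals), then the range of the
restriction `ι₀ : V₀ → U₀` of `ι*` is dense in `U₀`. -/
theorem predual_sequence_dense_range {U₀ V₀ W₀ : Type*}
    [NormedAddCommGroup U₀] [NormedSpace 𝕜 U₀] [CompleteSpace U₀]
    [NormedAddCommGroup V₀] [NormedSpace 𝕜 V₀] [CompleteSpace V₀]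
    [NormedAddCommGroup W₀] [NormedSpace 𝕜 W₀] [CompleteSpace W₀]
    (ι : StrongDual 𝕜 U₀ →L[𝕜] StrongDual 𝕜 V₀) (π : StrongDual 𝕜 V₀ →L[𝕜] StrongDual 𝕜 W₀)
    (hι : Function.Injective ι)
    (hexact : Set.range ι = {v : StrongDual 𝕜 V₀ | π v = 0})
    (hπ : Function.Surjective π)
    -- `π₀ : W₀ → V₀` is the restriction of `π*` to the preduals:
    (π₀ : W₀ →L[𝕜] V₀)
    (hπ₀ : ∀ w : W₀,
      inclusionInDoubleDual 𝕜 V₀ (π₀ w) = dualMap π (inclusionInDoubleDual 𝕜 W₀ w))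
    -- `ι₀ : V₀ → U₀` is the restriction of `ι*` to the preduals:
    (ι₀ : V₀ →L[𝕜] U₀)
    (hι₀ : ∀ v : V₀,
      inclusionInDoubleDual 𝕜 U₀ (ι₀ v) = dualMap ι (inclusionInDoubleDual 𝕜 V₀ v)) :
    DenseRange ι₀ :=
  predual_sequence_dense_range_general ι hι ι₀ hι₀
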